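/- Let b = [[1,0,0,0],[0,0,0,0],[0,1,1,0],[0,0,0,1]] (matrix b^(2) of Alimohammadi–Ahmadi) and I the 2×2 identity, working over ℂ(ξ_α,ξ_β,ξ_γ). Define R_{βα} = −(I⊗I − ξ_α b)⁻¹(I⊗I − ξ_β b), and similarly for the other index pairs. Then (R_{γβ} ⊗ I)(I ⊗ R_{γα})(R_{βα} ⊗ I) = (I ⊗ R_{βα})(R_{γα} ⊗ I)(I ⊗ R_{γβ}). -/
import Mathlib


open Matrix

noncomputable section

/-- The field of rational functions in the three spectral parameters `ξ_α, ξ_β, ξ_γ`. -/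
abbrev KK : Type := FractionRing (MvPolynomial (Fin 3) ℚ)

/-- The spectral parameters `ξ 0 = ξ_α`, `ξ 1 = ξ_β`, `ξ 2 = ξ_γ` as elements of `KK`. -/
def xi (i : Fin 3) : KK := algebraMap (MvPolynomial (Fin 3) ℚ) KK (MvPolynomial.X i)

/-- Reindexing of a 4×4 matrix by pairs, lexicographically: 0↦11, 1↦12, 2↦21, 3↦22. -/
def toPairs (M : Matrix (Fin 4) (Fin 4) KK) :
    Matrix (Fin 2 × Fin 2) (Fin 2 × Fin 2) KK :=
  Matrix.reindex finProdFinEquiv.symm finProdFinEquiv.symm M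

/-- The matrix `b^(2)` of Alimohammadi–Ahmadi. -/
def bmat : Matrix (Fin 2 × Fin 2) (Fin 2 × Fin 2) KK :=
  toPairs !![1,0,0,0; 0,0,0,0; 0,1,1,0; 0,0,0,1]

/-- The scattering matrix `R_{βα} = −(I⊗I − ξ_α b)⁻¹ (I⊗I − ξ_β b)`
(here `1` is the 4×4 identity `I⊗I`). -/
def R (β α : Fin 3) : Matrix (Fin 2 × Fin 2) (Fin 2 × Fin 2) KK :=
  -((1 - xi α • bmat)⁻¹ * (1 - xi β • bmat))

/-- `A ⊗ I` acting on the first two tensor factors of `(ℂ²)^{⊗3}`. -/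
def legL (A : Matrix (Fin 2 × Fin 2) (Fin 2 × Fin 2) KK) :
    Matrix (Fin 2 × Fin 2 × Fin 2) (Fin 2 × Fin 2 × Fin 2) KK :=
  Matrix.of fun p q => A (p.1, p.2.1) (q.1, q.2.1) * (if p.2.2 = q.2.2 then 1 else 0)

/-- `I ⊗ A` acting on the last two tensor factors of `(ℂ²)^{⊗3}`. -/
def legR (A : Matrix (Fin 2 × Fin 2) (Fin 2 × Fin 2) KK) :
    Matrix (Fin 2 × Fin 2 × Fin 2) (Fin 2 × Fin 2 × Fin 2) KK :=
  Matrix.of fun p q => (if p.1 = q.1 then 1 else 0) * A (p.2.1, p.2.2) (q.2.1, q.2.2)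

/-! ### Auxiliary matrices over a general field -/

variable {K : Type} [Field K]

/-- The interaction matrix `b`, written directly on pair indices. -/
def bp' : Matrix (Fin 2 × Fin 2) (Fin 2 × Fin 2) K :=
  Matrix.of fun p q =>
    if p = q then (if p = (0,1) then 0 else 1)
    else if p = (1,0) ∧ q = (0,1) then 1 else 0

/-- `(1 - v) • (1 - v • b)⁻¹`, a polynomial matrix. -/
def Pp' (v : K) : Matrix (Fin 2 × Fin 2) (Fin 2 × Fin 2) K :=
  Matrix.of fun p q =>
    if p = q then (if p = (0,1) then 1 - v else 1)
    else if p = (1,0) ∧ q = (0,1) then v else 0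

/-- The numerator matrix `P(v) * (1 - u • b)` of the scattering matrix. -/
def Tp' (u v : K) : Matrix (Fin 2 × Fin 2) (Fin 2 × Fin 2) K :=
  Matrix.of fun p q =>
    if p = q then (if p = (0,1) then 1 - v else 1 - u)
    else if p = (1,0) ∧ q = (0,1) then v - u else 0

/-- Generic version of `legL`. -/
def legL' (A : Matrix (Fin 2 × Fin 2) (Fin 2 × Fin 2) K) :
    Matrix (Fin 2 × Fin 2 × Fin 2) (Fin 2 × Fin 2 × Fin 2) K :=
  Matrix.of fun p q => A (p.1, p.2.1) (q.1, q.2.1) * (if p.2.2 = q.2.2 then 1 else 0)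

/-- Generic version of `legR`. -/
def legR' (A : Matrix (Fin 2 × Fin 2) (Fin 2 × Fin 2) K) :
    Matrix (Fin 2 × Fin 2 × Fin 2) (Fin 2 × Fin 2 × Fin 2) K :=
  Matrix.of fun p q => (if p.1 = q.1 then 1 else 0) * A (p.2.1, p.2.2) (q.2.1, q.2.2)

lemma bmat_eq : bmat = bp' := by
  ext ⟨i,j⟩ ⟨k,l⟩
  fin_cases i <;> fin_cases j <;> fin_cases k <;> fin_cases l <;> rfl

lemma legL_eq (A : Matrix (Fin 2 × Fin 2) (Fin 2 × Fin 2) KK) : legL A = legL' A := rfl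
lemma legR_eq (A : Matrix (Fin 2 × Fin 2) (Fin 2 × Fin 2) KK) : legR A = legR' A := rfl

lemma xi_ne (i : Fin 3) : (1 : KK) - xi i ≠ 0 := by
  rw [sub_ne_zero]
  intro h
  have h2 : (MvPolynomial.X i : MvPolynomial (Fin 3) ℚ) = 1 := by
    have hinj := IsFractionRing.injective (MvPolynomial (Fin 3) ℚ) KK
    apply hinj
    show xi i = algebraMap (MvPolynomial (Fin 3) ℚ) KK 1
    rw [_root_.map_one, ← h]
  have := congrArg MvPolynomial.constantCoeff h2
  simp at this

lemma mul1' (v : K) :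
    (1 - v • bp') * Pp' v = (1 - v) • (1 : Matrix (Fin 2 × Fin 2) (Fin 2 × Fin 2) K) := by
  ext ⟨i,j⟩ ⟨k,l⟩
  fin_cases i <;> fin_cases j <;> fin_cases k <;> fin_cases l <;>
    · simp [Matrix.mul_apply, Fintype.sum_prod_type, Fin.sum_univ_two, bp', Pp',
        Matrix.one_apply, Matrix.sub_apply, Matrix.smul_apply, Prod.ext_iff]
      try ring

lemma mulT' (u v : K) : Pp' v * (1 - u • bp') = Tp' u v := by
  ext ⟨i,j⟩ ⟨k,l⟩
  fin_cases i <;> fin_cases j <;> fin_cases k <;> fin_cases l <;>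
    · simp [Matrix.mul_apply, Fintype.sum_prod_type, Fin.sum_univ_two, bp', Pp', Tp',
        Matrix.one_apply, Matrix.sub_apply, Matrix.smul_apply, Prod.ext_iff]
      try ring

lemma invKK (v : KK) (h : (1 : KK) - v ≠ 0) :
    (1 - v • bmat)⁻¹ = (1 - v)⁻¹ • Pp' v := by
  apply Matrix.inv_eq_right_inv
  rw [bmat_eq, mul_smul_comm, mul1', smul_smul, inv_mul_cancel₀ h, one_smul]

lemma R_eq (β α : Fin 3) : R β α = (-(1 - xi α)⁻¹) • Tp' (xi β) (xi α) := by
  rw [R, invKK (xi α) (xi_ne α), smul_mul_assoc, bmat_eq, mulT', ← neg_smul]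

lemma legL'_smul (c : K) (A : Matrix (Fin 2 × Fin 2) (Fin 2 × Fin 2) K) :
    legL' (c • A) = c • legL' A := by
  ext p q
  simp [legL', Matrix.smul_apply, mul_assoc]

lemma legR'_smul (c : K) (A : Matrix (Fin 2 × Fin 2) (Fin 2 × Fin 2) K) :
    legR' (c • A) = c • legR' A := by
  ext p q
  simp [legR', Matrix.smul_apply]
  try ring

lemma tripleL (A B C : Matrix (Fin 2 × Fin 2) (Fin 2 × Fin 2) K) :
    legL' A * legR' B * legL' C = Matrix.of fun p q =>
      ∑ a, ∑ b, ∑ x, A (p.1, p.2.1) (a, x) * B (x, p.2.2) (b, q.2.2) * C (a, b) (q.1, q.2.1) := by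
  ext ⟨i,j,k⟩ ⟨l,m,n⟩
  simp only [Matrix.mul_apply, legL', legR', Matrix.of_apply, Fintype.sum_prod_type,
    ite_mul, mul_ite, mul_zero, zero_mul, mul_one, one_mul,
    Finset.sum_ite_eq, Finset.sum_ite_eq', Finset.mul_sum, Finset.sum_mul,
    Finset.sum_ite_irrel, Finset.sum_const_zero, Finset.mem_univ, if_true]

lemma tripleR (A B C : Matrix (Fin 2 × Fin 2) (Fin 2 × Fin 2) K) :
    legR' A * legL' B * legR' C = Matrix.of fun p q =>
      ∑ b, ∑ c, ∑ x, A (p.2.1, p.2.2) (x, c) * B (p.1, x) (q.1, b) * C (b, c) (q.2.1, q.2.2) := by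
  ext ⟨i,j,k⟩ ⟨l,m,n⟩
  simp only [Matrix.mul_apply, legL', legR', Matrix.of_apply, Fintype.sum_prod_type,
    ite_mul, mul_ite, mul_zero, zero_mul, mul_one, one_mul,
    Finset.sum_ite_eq, Finset.sum_ite_eq', Finset.mul_sum, Finset.sum_mul,
    Finset.sum_ite_irrel, Finset.sum_const_zero, Finset.mem_univ, if_true]

set_option maxHeartbeats 2000000 in
/-- The Yang–Baxter equation for the numerator matrices: a polynomial identity. -/
lemma core' (x0 x1 x2 : K) :
    legL' (Tp' x2 x1) * legR' (Tp' x2 x0) * legL' (Tp' x1 x0) =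
      legR' (Tp' x1 x0) * legL' (Tp' x2 x0) * legR' (Tp' x2 x1) := by
  rw [tripleL, tripleR]
  ext ⟨i,j,k⟩ ⟨l,m,n⟩
  fin_cases i <;> fin_cases j <;> fin_cases k <;> fin_cases l <;> fin_cases m <;> fin_cases n <;>
    · simp only [Matrix.of_apply, Fin.sum_univ_two, Tp', Prod.mk.injEq, Fin.isValue]
      try norm_num
      try tauto
      try ring
      try exact Or.inl trivial

/-- The Yang–Baxter equation for this interaction matrix:
`(R_{γβ} ⊗ I)(I ⊗ R_{γα})(R_{βα} ⊗ I) = (I ⊗ R_{βα})(R_{γα} ⊗ I)(I ⊗ R_{γβ})`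
with `α = 0`, `β = 1`, `γ = 2`. -/
theorem yang_baxter_b2 :
    legL (R 2 1) * legR (R 2 0) * legL (R 1 0) =
      legR (R 1 0) * legL (R 2 0) * legR (R 2 1) := by
  rw [R_eq 2 1, R_eq 2 0, R_eq 1 0]
  simp only [legL_eq, legR_eq, legL'_smul, legR'_smul, smul_mul_assoc, mul_smul_comm, smul_smul]
  rw [core' (xi 0) (xi 1) (xi 2)]
  congr 1
  ring

end
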